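/- arXiv:1811.12360 — 2 statements merged into one kernel-verified Lean document; each statement's English description precedes it below -/
import Mathlib

section
/- Let n, k be positive integers with n ≥ 2(k+1), let G be the web graph W_n^k, and let C ⊆ V(G) (C possibly empty). Then (G;C) is a clutter if and only if n > 2(k+1) or C = V(G). -/
/-!
If `n = 2(k+1)`, every vertex `v` of `W_n^k` has an antipode `v + (k+1)` with the same open
neighbourhood `V ∖ {v, v + (k+1)}`, so `N⟨v⟩ ⊆ N⟨v + (k+1)⟩` as soon as `v ∉ C`.
Conversely, for distinct `u, v` the relation `u ◁ v` is witnessed either by `v` itself (when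
`v ∈ C` and `u ≁ v`) or by a neighbour of `v` outside `N[u]`: if `u ~ v` take the vertex at
cyclic distance `k+1` from `u` on the side of `v`, and if `u ≁ v` and `n > 2(k+1)` one of the two
cyclic neighbours `v ± 1` of `v` still lies at cyclic distance at least `k+1` from `u`.
-/

namespace LegalSeq

variable {V : Type*}

/-- The generalized neighborhood `N⟨v⟩`: the closed neighborhood of `v` if `v ∈ C`,
the open neighborhood otherwise. -/
noncomputable def gN [Fintype V] (G : SimpleGraph V) (C : Set V) (v : V) : Finset V := by
  classical
  exact (Set.toFinite (if v ∈ C then insert v (G.neighborSet v) else G.neighborSet v)).toFinset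

/-- The instance `(G;C)` is a clutter if `u ◁ v` (i.e. `N⟨v⟩ ∖ N⟨u⟩ ≠ ∅`) for all pairs of
distinct vertices `u, v`. -/
def IsClutter [Fintype V] (G : SimpleGraph V) (C : Set V) : Prop :=
  ∀ u v : V, u ≠ v → ¬ (gN G C v ⊆ gN G C u)

/-- The web graph `W_n^k`: vertices `{0, …, n−1}`, with `i ~ j` iff `0 < |i − j| ≤ k` or
`|i − j| ≥ n − k`. -/
def webG (n k : ℕ) : SimpleGraph (Fin n) where
  Adj i j := i ≠ j ∧ (Nat.dist i.1 j.1 ≤ k ∨ n - k ≤ Nat.dist i.1 j.1)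
  symm := ⟨by
    intro i j h
    refine ⟨h.1.symm, ?_⟩
    rw [Nat.dist_comm]
    exact h.2⟩
  loopless := ⟨fun i h => h.1 rfl⟩

section Clutter

variable [Fintype V] {G : SimpleGraph V} {C : Set V} {u v w : V}

lemma mem_gN : w ∈ gN G C v ↔ G.Adj v w ∨ (v ∈ C ∧ w = v) := by
  classical
  unfold gN
  rw [Set.Finite.mem_toFinset]
  by_cases hv : v ∈ C <;> simp [hv, or_comm]

lemma gN_subset_gN_of_neighborSet_subset (hv : v ∉ C)
    (h : G.neighborSet v ⊆ G.neighborSet u) : gN G C v ⊆ gN G C u := by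
  intro w hw
  rw [mem_gN] at hw ⊢
  exact .inl (h (hw.resolve_right fun hvw => hv hvw.1))

lemma not_gN_subset_gN_of_adj (hvw : G.Adj v w) (huw : ¬G.Adj u w) (hwu : w ≠ u) :
    ¬gN G C v ⊆ gN G C u := fun h => by
  rcases mem_gN.mp (h (mem_gN.mpr (.inl hvw))) with huw' | ⟨-, hwu'⟩
  exacts [huw huw', hwu hwu']

lemma not_gN_subset_gN_of_mem (hv : v ∈ C) (huv : u ≠ v) (hnadj : ¬G.Adj u v) :
    ¬gN G C v ⊆ gN G C u := fun h => by
  rcases mem_gN.mp (h (mem_gN.mpr (.inr ⟨hv, rfl⟩))) with huv' | ⟨-, hvu⟩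
  exacts [hnadj huv', huv hvu.symm]

end Clutter

section Web

variable {n k : ℕ}

lemma webG_adj {i j : Fin n} :
    (webG n k).Adj i j ↔ i.1 ≠ j.1 ∧ (Nat.dist i.1 j.1 ≤ k ∨ n - k ≤ Nat.dist i.1 j.1) := by
  simp [webG, Fin.ext_iff]

lemma webG_neighborSet_subset_antipode (hn : n = 2 * (k + 1)) (v : Fin n) :
    ∃ u, u ≠ v ∧ (webG n k).neighborSet v ⊆ (webG n k).neighborSet u := by
  refine ⟨⟨if v.1 + (k + 1) < n then v.1 + (k + 1) else v.1 + (k + 1) - n,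
    by split_ifs <;> omega⟩, ?_, fun w hw => ?_⟩
  · simp only [ne_eq, Fin.ext_iff]
    split_ifs <;> omega
  · simp only [SimpleGraph.mem_neighborSet, webG_adj, Nat.dist] at hw ⊢
    split_ifs <;> omega

lemma webG_exists_adj_not_adj_of_adj (hn : 2 * (k + 1) ≤ n) {u v : Fin n}
    (huv : (webG n k).Adj u v) :
    ∃ w, (webG n k).Adj v w ∧ ¬(webG n k).Adj u w ∧ w ≠ u := by
  simp only [webG_adj, Nat.dist] at huv
  by_cases hcw : (u.1 < v.1 ∧ v.1 - u.1 ≤ k) ∨ (v.1 < u.1 ∧ n - k ≤ u.1 - v.1)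
  · refine ⟨⟨if u.1 + (k + 1) < n then u.1 + (k + 1) else u.1 + (k + 1) - n,
      by split_ifs <;> omega⟩, ?_⟩
    simp only [webG_adj, Nat.dist, ne_eq, Fin.ext_iff]
    split_ifs <;> omega
  · refine ⟨⟨if k + 1 ≤ u.1 then u.1 - (k + 1) else u.1 + n - (k + 1), by split_ifs <;> omega⟩, ?_⟩
    simp only [webG_adj, Nat.dist, ne_eq, Fin.ext_iff]
    split_ifs <;> omega

lemma webG_exists_adj_not_adj_of_not_adj (hk : 1 ≤ k) (hn : 2 * (k + 1) < n) {u v : Fin n}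
    (huv : u ≠ v) (hnadj : ¬(webG n k).Adj u v) :
    ∃ w, (webG n k).Adj v w ∧ ¬(webG n k).Adj u w ∧ w ≠ u := by
  rw [ne_eq, Fin.ext_iff] at huv
  simp only [webG_adj, Nat.dist] at hnadj
  by_cases hfar : (u.1 ≤ v.1 ∧ v.1 - u.1 ≤ n - k - 2) ∨ (v.1 < u.1 ∧ v.1 + n - u.1 ≤ n - k - 2)
  · refine ⟨⟨if v.1 + 1 < n then v.1 + 1 else 0, by split_ifs <;> omega⟩, ?_⟩
    simp only [webG_adj, Nat.dist, ne_eq, Fin.ext_iff]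
    split_ifs <;> omega
  · refine ⟨⟨if 1 ≤ v.1 then v.1 - 1 else n - 1, by split_ifs <;> omega⟩, ?_⟩
    simp only [webG_adj, Nat.dist, ne_eq, Fin.ext_iff]
    split_ifs <;> omega

end Web

/-- For `n ≥ 2(k+1)`, the instance `(W_n^k; C)` is a clutter iff
`n > 2(k+1)` or `C = V`. -/
theorem web_clutter_iff (n k : ℕ) (hk : 1 ≤ k) (hn : 2 * (k + 1) ≤ n) (C : Set (Fin n)) :
    IsClutter (webG n k) C ↔ (2 * (k + 1) < n ∨ C = Set.univ) := by
  constructor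
  · intro hcl
    by_contra! hcon
    obtain ⟨hle, hC⟩ := hcon
    obtain ⟨v, hv⟩ := (Set.ne_univ_iff_exists_notMem C).mp hC
    obtain ⟨u, hvu, hsub⟩ := webG_neighborSet_subset_antipode (le_antisymm hle hn) v
    exact hcl u v hvu (gN_subset_gN_of_neighborSet_subset hv hsub)
  · intro hside u v huv
    by_cases hadj : (webG n k).Adj u v
    · obtain ⟨w, hvw, huw, hwu⟩ := webG_exists_adj_not_adj_of_adj hn hadj
      exact not_gN_subset_gN_of_adj hvw huw hwu
    by_cases hv : v ∈ C
    · exact not_gN_subset_gN_of_mem hv huv hadj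
    have hlt : 2 * (k + 1) < n := hside.resolve_right fun hC => hv (hC ▸ Set.mem_univ v)
    obtain ⟨w, hvw, huw, hwu⟩ := webG_exists_adj_not_adj_of_not_adj hk hlt huv hadj
    exact not_gN_subset_gN_of_adj hvw huw hwu

end LegalSeq
end

section
/- Assume G is connected, n ≥ 3, and (G;C) is twin free. Then for u ∈ V and i ∈ {1,…,m}, the inequality x_{u,i} ≥ 0 is facet-defining for P if and only if i = m. -/
/-!
Every point of `P` satisfies `0 ≤ x_{u,i+1} ≤ x_{u,i}`, so for `i < m` the face `x_{u,i} = 0`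
lies in the codimension-two subspace `x_{u,i} = x_{u,i+1} = 0`. For `i = m` the face spans the
whole hyperplane `x_{u,m} = 0`: writing `X(w,t)` for the 0/1 vector supported on `{w} × [1,t]`,
the feasible points `(X(v,j), 0)` and `(X(v,j-1), 0)` differ by the unit vector at `x_{v,j}`, and
`(X(w,j-1), e_{v,j})` with `w ∈ N⟨v⟩` is feasible (`w` leaves the support exactly at step `j`),
giving the unit vector at `y_{v,j}`. None of these points touches `x_{u,m}`.
-/

open Finset

namespace LegalSeq

variable {V : Type*}

/-- The ambient space `ℝ^{V×{1,…,m}} × ℝ^{V×{1,…,m}}` of the polytope of legal sequences. -/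
abbrev Pt (V : Type*) (m : ℕ) := (V × Fin m → ℝ) × (V × Fin m → ℝ)

/-- Feasible 0/1 pairs `(x, y)` of the formulation `F₁` (constraints (1)-(5)). -/
def Feasible [Fintype V] (G : SimpleGraph V) (C : Set V) (m : ℕ) : Set (Pt V m) :=
  { p | (∀ q, p.1 q = 0 ∨ p.1 q = 1) ∧ (∀ q, p.2 q = 0 ∨ p.2 q = 1) ∧
    (∀ i : Fin m, ∑ v : V, p.2 (v, i) ≤ 1) ∧
    (∀ v : V, ∑ i : Fin m, p.2 (v, i) ≤ 1) ∧
    (∀ (v : V) (i : Fin m) (h : i.1 + 1 < m),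
        p.2 (v, ⟨i.1 + 1, h⟩) ≤ ∑ u ∈ gN G C v, (p.1 (u, i) - p.1 (u, ⟨i.1 + 1, h⟩))) ∧
    (∀ (u : V) (i : Fin m), p.1 (u, i) + ∑ v ∈ gN G C u, p.2 (v, i) ≤ 1) ∧
    (∀ (u : V) (i : Fin m) (h : i.1 + 1 < m), p.1 (u, ⟨i.1 + 1, h⟩) ≤ p.1 (u, i)) }

/-- The polytope of legal sequences: the convex hull of the feasible 0/1 pairs. -/
noncomputable def poly [Fintype V] (G : SimpleGraph V) (C : Set V) (m : ℕ) : Set (Pt V m) :=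
  convexHull ℝ (Feasible G C m)

/-- `δ(G;C)`, the minimum cardinality of a generalized neighborhood. -/
noncomputable def gdelta [Fintype V] (G : SimpleGraph V) (C : Set V) : ℕ :=
  sInf (Set.range fun v : V => (gN G C v).card)

/-- The instance `(G;C)` is twin free if distinct vertices have distinct
generalized neighborhoods. -/
def TwinFree [Fintype V] (G : SimpleGraph V) (C : Set V) : Prop :=
  ∀ u v : V, u ≠ v → gN G C u ≠ gN G C v

/-- The inequality `f p ≤ a` is valid for the polytope and the face it defines has affine
dimension `2nm - 1`, i.e. it is facet-defining. -/
def IsFacet [Fintype V] (G : SimpleGraph V) (C : Set V) (m : ℕ)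
    (f : Pt V m → ℝ) (a : ℝ) : Prop :=
  (∀ p ∈ poly G C m, f p ≤ a) ∧
  Module.finrank ℝ ((affineSpan ℝ {p ∈ poly G C m | f p = a}).direction) =
    2 * Fintype.card V * m - 1
section Coordinates

variable {ι : Type*}

def xCoord (q : ι) : (ι → ℝ) × (ι → ℝ) →ₗ[ℝ] ℝ :=
  (LinearMap.proj q).comp (LinearMap.fst ℝ _ _)

@[simp] lemma xCoord_apply (q : ι) (p : (ι → ℝ) × (ι → ℝ)) : xCoord q p = p.1 q := rfl

lemma finrank_ker_xCoord [Fintype ι] (q : ι) :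
    Module.finrank ℝ (LinearMap.ker (xCoord q)) = 2 * Fintype.card ι - 1 := by
  classical
  have hne : xCoord q ≠ 0 := fun h => by
    simpa using LinearMap.congr_fun h ((Pi.single q 1, 0) : (ι → ℝ) × (ι → ℝ))
  have h := Module.Dual.finrank_ker_add_one_of_ne_zero hne
  rw [Module.finrank_prod, Module.finrank_fintype_fun_eq_card] at h
  omega

lemma ker_xCoord_le [Fintype ι] [DecidableEq ι] {W : Submodule ℝ ((ι → ℝ) × (ι → ℝ))} (q₀ : ι)
    (hx : ∀ q ≠ q₀, ((Pi.single q 1, 0) : (ι → ℝ) × (ι → ℝ)) ∈ W)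
    (hy : ∀ q, ((0, Pi.single q 1) : (ι → ℝ) × (ι → ℝ)) ∈ W) :
    LinearMap.ker (xCoord q₀) ≤ W := by
  intro z hz
  have hz₀ : z.1 q₀ = 0 := hz
  have hdecomp : z = ∑ q, (z.1 q • ((Pi.single q 1 : ι → ℝ), (0 : ι → ℝ)) +
      z.2 q • ((0 : ι → ℝ), (Pi.single q 1 : ι → ℝ))) := by
    ext q <;> simp [Prod.fst_sum, Prod.snd_sum, Finset.sum_apply, Pi.single_apply]
  rw [hdecomp]
  refine W.sum_mem fun q _ => W.add_mem ?_ (W.smul_mem _ (hy q))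
  by_cases hq : q = q₀
  · rw [hq, hz₀, zero_smul]
    exact W.zero_mem
  · exact W.smul_mem _ (hx q hq)

end Coordinates

lemma direction_affineSpan_le_ker {k E N : Type*} [Ring k] [AddCommGroup E] [Module k E]
    [AddCommGroup N] [Module k N] {s : Set E} (f : E →ₗ[k] N) (hs : ∀ p ∈ s, f p = 0) :
    (affineSpan k s).direction ≤ LinearMap.ker f := by
  rw [direction_affineSpan, vectorSpan_def, Submodule.span_le]
  rintro _ ⟨a, ha, b, hb, rfl⟩
  simp [hs a ha, hs b hb]

lemma sum_pi_single_comp_le_one {α β : Type*} [DecidableEq β] {s : Finset α} {f : α → β}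
    (hf : Set.InjOn f s) (b : β) : ∑ x ∈ s, (Pi.single b (1 : ℝ) : β → ℝ) (f x) ≤ 1 := by
  rw [← Finset.sum_image (f := (Pi.single b (1 : ℝ) : β → ℝ)) hf, Finset.sum_pi_single']
  split_ifs <;> norm_num

section Prefix

variable [DecidableEq V] {m : ℕ}

def prefixX (w : V) (t : ℕ) : V × Fin m → ℝ :=
  fun q => if q.1 = w ∧ (q.2 : ℕ) < t then 1 else 0

lemma prefixX_eq_zero_or_one (w : V) (t : ℕ) (q : V × Fin m) :
    prefixX w t q = 0 ∨ prefixX w t q = 1 := by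
  unfold prefixX; split_ifs <;> simp

lemma prefixX_le_one (w : V) (t : ℕ) (q : V × Fin m) : prefixX w t q ≤ 1 := by
  rcases prefixX_eq_zero_or_one w t q with h | h <;> simp [h]

lemma prefixX_eq_zero {w : V} {t : ℕ} {q : V × Fin m} (h : q.1 ≠ w ∨ t ≤ q.2) :
    prefixX w t q = 0 := by
  unfold prefixX
  rw [if_neg]
  grind

lemma prefixX_succ_le (w : V) (t : ℕ) (u : V) (i : Fin m) (h : i.1 + 1 < m) :
    prefixX w t (u, ⟨i.1 + 1, h⟩) ≤ prefixX w t (u, i) := by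
  dsimp only [prefixX]
  split_ifs <;> grind

lemma prefixX_succ_sub_prefixX (v : V) (j : Fin m) :
    prefixX v (j + 1) - prefixX v j = Pi.single (v, j) 1 := by
  ext ⟨w, k⟩
  simp only [prefixX, Pi.sub_apply, Pi.single_apply, Prod.ext_iff, Fin.ext_iff]
  split_ifs <;> grind

end Prefix

section Polytope

variable [Fintype V] {G : SimpleGraph V} {C : Set V} {m : ℕ}

lemma gN_nonempty (hiso : ∀ w : V, w ∉ C → ∃ z, G.Adj w z) (v : V) : (gN G C v).Nonempty := by
  by_cases hv : v ∈ C
  · exact ⟨v, by simp [gN, hv]⟩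
  · obtain ⟨z, hz⟩ := hiso v hv
    exact ⟨z, by simp [gN, hv, hz]⟩

lemma le_of_mem_poly (f : Pt V m →ₗ[ℝ] ℝ) {a : ℝ} (h : ∀ p ∈ Feasible G C m, f p ≤ a)
    {p : Pt V m} (hp : p ∈ poly G C m) : f p ≤ a :=
  convexHull_min h (convex_halfSpace_le f.isLinear a) hp

lemma poly_x_nonneg {p : Pt V m} (hp : p ∈ poly G C m) (q : V × Fin m) : 0 ≤ p.1 q := by
  have := le_of_mem_poly (-xCoord q) (a := 0)
    (fun p hp => by rcases hp.1 q with h | h <;> simp [h]) hp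
  simpa using this

lemma poly_x_succ_le {p : Pt V m} (hp : p ∈ poly G C m) (u : V) (i : Fin m) (h : i.1 + 1 < m) :
    p.1 (u, ⟨i.1 + 1, h⟩) ≤ p.1 (u, i) := by
  have := le_of_mem_poly (xCoord (u, ⟨i.1 + 1, h⟩) - xCoord (u, i)) (a := 0)
    (fun p hp => by simpa using hp.2.2.2.2.2.2 u i h) hp
  simpa [sub_nonpos] using this

variable [DecidableEq V]

lemma prefixX_zero_mem_feasible (w : V) (t : ℕ) : ((prefixX w t, 0) : Pt V m) ∈ Feasible G C m := by
  refine ⟨prefixX_eq_zero_or_one w t, fun _ => Or.inl rfl, fun _ => by simp, fun _ => by simp,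
    fun v i h => ?_, fun u i => by simpa using prefixX_le_one w t (u, i),
    fun u i h => prefixX_succ_le w t u i h⟩
  simpa using sum_nonneg fun u _ => sub_nonneg.2 (prefixX_succ_le w t u i h)

lemma prefixX_single_mem_feasible {w v : V} (hw : w ∈ gN G C v) (j : Fin m) :
    ((prefixX w j, Pi.single (v, j) 1) : Pt V m) ∈ Feasible G C m := by
  refine ⟨prefixX_eq_zero_or_one w j, fun q => ?_,
    fun i => sum_pi_single_comp_le_one (Prod.mk_left_injective i).injOn _,
    fun v' => sum_pi_single_comp_le_one (Prod.mk_right_injective v').injOn _,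
    fun v' i h => ?_, fun u i => ?_, fun u i h => prefixX_succ_le w j u i h⟩
  · dsimp only
    rw [Pi.single_apply]
    split_ifs <;> simp
  · have hnonneg : ∀ u ∈ gN G C v', 0 ≤ prefixX w j (u, i) - prefixX w j (u, ⟨i.1 + 1, h⟩) :=
      fun u _ => sub_nonneg.2 (prefixX_succ_le w j u i h)
    by_cases hq : ((v', ⟨i.1 + 1, h⟩) : V × Fin m) = (v, j)
    · obtain ⟨rfl, rfl⟩ := Prod.mk.inj hq
      calc (Pi.single (v', ⟨i.1 + 1, h⟩) 1 : V × Fin m → ℝ) (v', ⟨i.1 + 1, h⟩)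
          = prefixX w (i.1 + 1) (w, i) - prefixX w (i.1 + 1) (w, ⟨i.1 + 1, h⟩) := by
            simp [prefixX]
        _ ≤ _ := single_le_sum hnonneg hw
    · dsimp only
      rw [Pi.single_eq_of_ne hq]
      exact sum_nonneg hnonneg
  · dsimp only
    by_cases hij : i = j
    · subst hij
      rw [prefixX_eq_zero (t := i) (q := (u, i)) (Or.inr le_rfl), zero_add]
      exact sum_pi_single_comp_le_one (Prod.mk_left_injective i).injOn _
    · rw [sum_eq_zero fun v' _ => Pi.single_eq_of_ne (by simp [hij]) _, add_zero]
      exact prefixX_le_one w j (u, i)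

lemma ker_xCoord_le_direction_face (hiso : ∀ w : V, w ∉ C → ∃ z, G.Adj w z) {u : V} {i : Fin m}
    (hi : i.1 + 1 = m) :
    LinearMap.ker (xCoord (u, i)) ≤
      (affineSpan ℝ {p ∈ poly G C m | p.1 (u, i) = 0}).direction := by
  set F := {p ∈ poly G C m | p.1 (u, i) = 0}
  have mem_F : ∀ p ∈ Feasible G C m, p.1 (u, i) = 0 → p ∈ F :=
    fun p hp h => ⟨subset_convexHull ℝ _ hp, h⟩
  have sub_mem : ∀ p ∈ F, ∀ p' ∈ F, p - p' ∈ (affineSpan ℝ F).direction := fun p hp p' hp' => by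
    rw [direction_affineSpan]
    exact vsub_mem_vectorSpan ℝ hp hp'
  -- `i` is the last index, so `prefixX w j` vanishes at `(u, i)` for every `j : Fin m`
  have hle : ∀ j : Fin m, (j : ℕ) ≤ i := fun j => by omega
  refine ker_xCoord_le (u, i) ?_ ?_
  · rintro ⟨v, j⟩ hq
    have hji : u ≠ v ∨ (j : ℕ) + 1 ≤ i := by
      by_cases huv : u = v
      · subst huv
        have : j ≠ i := fun h => hq (by rw [h])
        have := hle j
        omega
      · exact Or.inl huv
    rw [← prefixX_succ_sub_prefixX, ← sub_zero (0 : V × Fin m → ℝ), ← Prod.mk_sub_mk]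
    exact sub_mem _ (mem_F _ (prefixX_zero_mem_feasible _ _) (prefixX_eq_zero hji))
      _ (mem_F _ (prefixX_zero_mem_feasible _ _) (prefixX_eq_zero (Or.inr (hle j))))
  · rintro ⟨v, j⟩
    obtain ⟨w, hw⟩ := gN_nonempty hiso v
    rw [← sub_self (prefixX w j : V × Fin m → ℝ), ← sub_zero (Pi.single (v, j) 1 : V × Fin m → ℝ),
      ← Prod.mk_sub_mk]
    exact sub_mem _ (mem_F _ (prefixX_single_mem_feasible hw j) (prefixX_eq_zero (Or.inr (hle j))))
      _ (mem_F _ (prefixX_zero_mem_feasible _ _) (prefixX_eq_zero (Or.inr (hle j))))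

end Polytope

theorem x_nonneg_facet_iff_general [Fintype V] (G : SimpleGraph V) (C : Set V)
    (hiso : ∀ w : V, w ∉ C → ∃ z, G.Adj w z)
    (m : ℕ) (u : V) (i : Fin m) :
    IsFacet G C m (fun p => -(p.1 (u, i))) 0 ↔ i.1 + 1 = m := by
  classical
  set F := {p ∈ poly G C m | p.1 (u, i) = 0}
  have hF : {p ∈ poly G C m | -(p.1 (u, i)) = 0} = F := by simp only [neg_eq_zero, F]
  simp only [IsFacet, neg_nonpos]
  rw [hF]
  have hker : Module.finrank ℝ (LinearMap.ker (xCoord (u, i))) = 2 * Fintype.card V * m - 1 := by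
    rw [finrank_ker_xCoord, Fintype.card_prod, Fintype.card_fin, mul_assoc]
  have hdir : (affineSpan ℝ F).direction ≤ LinearMap.ker (xCoord (u, i)) :=
    direction_affineSpan_le_ker _ fun p hp => hp.2
  constructor
  · rintro ⟨-, hdim⟩
    by_contra hne
    have hlt : i.1 + 1 < m := by omega
    have heq := Submodule.eq_of_le_of_finrank_eq hdir (hdim.trans hker.symm)
    -- on the face, `x_{u,i+1}` is squeezed between `0` and `x_{u,i} = 0`
    have hdir' : (affineSpan ℝ F).direction ≤ LinearMap.ker (xCoord (u, ⟨i.1 + 1, hlt⟩)) :=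
      direction_affineSpan_le_ker _ fun p hp =>
        le_antisymm (hp.2 ▸ poly_x_succ_le hp.1 u i hlt) (poly_x_nonneg hp.1 _)
    have hmem : ((Pi.single (u, ⟨i.1 + 1, hlt⟩) 1, 0) : Pt V m) ∈ (affineSpan ℝ F).direction := by
      rw [heq]
      simp [Prod.ext_iff, Fin.ext_iff]
    simpa using hdir' hmem
  · intro hi
    refine ⟨fun p hp => poly_x_nonneg hp _, ?_⟩
    rw [le_antisymm hdir (ker_xCoord_le_direction_face hiso hi), hker]

/-- For `G` connected, `n ≥ 3`, `(G;C)` twin free: the inequality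
`x_{u,i} ≥ 0` (i.e. `−x_{u,i} ≤ 0`) is facet-defining for `P` iff `i = m` (0-based:
`i.1 + 1 = m`). -/
theorem x_nonneg_facet_iff [Fintype V] (G : SimpleGraph V) (C : Set V)
    (hconn : G.Connected) (hcard : 3 ≤ Fintype.card V)
    (hiso : ∀ w : V, w ∉ C → ∃ z, G.Adj w z)
    (htf : TwinFree G C)
    (m : ℕ) (hm : m = Fintype.card V - gdelta G C + 1)
    (u : V) (i : Fin m) :
    IsFacet G C m (fun p => -(p.1 (u, i))) 0 ↔ i.1 + 1 = m :=
  x_nonneg_facet_iff_general G C hiso m u i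

end LegalSeq
end
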